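/- arXiv:1205.4342 — 4 statements merged into one kernel-verified Lean document; each statement's English description precedes it below -/
import Mathlib

section
/- If U : [0,1] → ℝ is concave and ℓ ≥ 2 is an integer, then (1/ℓ)·∑_{j=0}^{ℓ−1} U(j/(ℓ−1)) ≤ ∫₀¹ U(t) dt. -/
/-!
Pairing `t` with its reflection `a + b - t` shows `U a + U b ≤ U t + U (a + b - t)` on `[a, b]`.
Integrating this over `[a, b]` bounds each trapezoid of the composite trapezoidal rule with nodes
`j / n` by the integral; summing it over the nodes shows that the endpoint mean `(U 0 + U 1) / 2` is
at most the average of the `n + 1` nodal values. Together these give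
`S / (n + 1) ≤ (S - (U 0 + U 1) / 2) / n ≤ ∫₀¹ U` for the nodal sum `S`.
-/

open Set MeasureTheory

theorem ConcaveOn.add_le_add_reflect {s : Set ℝ} {U : ℝ → ℝ} (hU : ConcaveOn ℝ s U) {a b t : ℝ}
    (ha : a ∈ s) (hb : b ∈ s) (ht : t ∈ segment ℝ a b) :
    U a + U b ≤ U t + U (a + b - t) := by
  obtain ⟨p, q, hp, hq, hpq, rfl⟩ := ht
  have hreflect : a + b - (p • a + q • b) = q • a + p • b := by
    simp only [smul_eq_mul]
    linear_combination -(a + b) * hpq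
  rw [hreflect]
  have hleft := hU.2 ha hb hp hq hpq
  have hright := hU.2 ha hb hq hp (by rwa [add_comm])
  simp only [smul_eq_mul] at hleft hright
  linear_combination hleft + hright - (U a + U b) * hpq

theorem ConcaveOn.trapezoid_le_intervalIntegral {U : ℝ → ℝ} {a b : ℝ}
    (hU : ConcaveOn ℝ (Icc a b) U) (hcont : ContinuousOn U (Icc a b)) (hab : a ≤ b) :
    (b - a) * ((U a + U b) / 2) ≤ ∫ t in a..b, U t := by
  have hint : IntervalIntegrable U volume a b := hcont.intervalIntegrable_of_Icc hab
  have hint_reflect : IntervalIntegrable (fun t => U (a + b - t)) volume a b := by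
    simpa using (hint.comp_sub_left (a + b)).symm
  have hreflect : ∫ t in a..b, U (a + b - t) = ∫ t in a..b, U t := by
    simp [intervalIntegral.integral_comp_sub_left]
  have hpair : ∫ _ in a..b, (U a + U b) ≤ ∫ t in a..b, (U t + U (a + b - t)) :=
    intervalIntegral.integral_mono_on hab intervalIntegrable_const (hint.add hint_reflect) fun t ht =>
      hU.add_le_add_reflect (left_mem_Icc.2 hab) (right_mem_Icc.2 hab)
        (by rwa [segment_eq_Icc hab])
  rw [intervalIntegral.integral_const, intervalIntegral.integral_add hint hint_reflect, hreflect, smul_eq_mul] at hpair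
  linarith

theorem Finset.sum_range_add_succ_div_two (f : ℕ → ℝ) (n : ℕ) :
    ∑ i ∈ Finset.range n, (f i + f (i + 1)) / 2 = ∑ j ∈ Finset.range (n + 1), f j - (f 0 + f n) / 2 := by
  rw [← Finset.sum_div, Finset.sum_add_distrib]
  have hlast := Finset.sum_range_succ f n
  have hfirst := Finset.sum_range_succ' f n
  linarith

theorem ConcaveOn.trapezoidal_rule_le_intervalIntegral {U : ℝ → ℝ}
    (hU : ConcaveOn ℝ (Icc 0 1) U) (hcont : ContinuousOn U (Icc 0 1)) {n : ℕ} (hn : n ≠ 0) :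
    (∑ j ∈ Finset.range (n + 1), U (j / n) - (U 0 + U 1) / 2) / n ≤ ∫ t in (0 : ℝ)..1, U t := by
  have hn' : (0 : ℝ) < n := by positivity
  have hnode_mono : ∀ i : ℕ, (i : ℝ) / n ≤ (i + 1 : ℕ) / n := fun i =>
    div_le_div_of_nonneg_right (by norm_num) hn'.le
  have hcell_sub : ∀ i < n, Icc ((i : ℝ) / n) ((i + 1 : ℕ) / n) ⊆ Icc 0 1 := fun i hi =>
    Icc_subset_Icc (by positivity) (div_le_one_of_le₀ (by exact_mod_cast hi) hn'.le)
  have hcell : ∀ i < n, (1 / n : ℝ) * ((U (i / n) + U ((i + 1 : ℕ) / n)) / 2) ≤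
      ∫ t in (i / n : ℝ)..((i + 1 : ℕ) / n), U t := fun i hi => by
    have hwidth : ((i + 1 : ℕ) : ℝ) / n - i / n = 1 / n := by push_cast; ring
    simpa only [hwidth] using (hU.subset (hcell_sub i hi) (convex_Icc _ _)).trapezoid_le_intervalIntegral
      (hcont.mono (hcell_sub i hi)) (hnode_mono i)
  have hsplit := intervalIntegral.sum_integral_adjacent_intervals (f := U) (μ := volume) (a := fun i : ℕ => (i / n : ℝ))
    fun i hi => (hcont.mono (hcell_sub i hi)).intervalIntegrable_of_Icc (hnode_mono i)
  simp only [Nat.cast_zero, zero_div, div_self hn'.ne'] at hsplit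
  calc (∑ j ∈ Finset.range (n + 1), U (j / n) - (U 0 + U 1) / 2) / n
      = ∑ i ∈ Finset.range n, (1 / n : ℝ) * ((U (i / n) + U ((i + 1 : ℕ) / n)) / 2) := by
        rw [← Finset.mul_sum, Finset.sum_range_add_succ_div_two (fun j => U (j / n)) n]
        simp [div_self hn'.ne', div_eq_inv_mul]
    _ ≤ ∑ i ∈ Finset.range n, ∫ t in (i / n : ℝ)..((i + 1 : ℕ) / n), U t :=
        Finset.sum_le_sum fun i hi => hcell i (Finset.mem_range.1 hi)
    _ = ∫ t in (0 : ℝ)..1, U t := hsplit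

theorem ConcaveOn.endpoint_mean_le_sum_range {U : ℝ → ℝ} (hU : ConcaveOn ℝ (Icc 0 1) U)
    {n : ℕ} (hn : n ≠ 0) :
    (n + 1) * ((U 0 + U 1) / 2) ≤ ∑ j ∈ Finset.range (n + 1), U (j / n) := by
  have hn' : (0 : ℝ) < n := by positivity
  have hnode : ∀ j ∈ Finset.range (n + 1), (j : ℝ) / n ∈ Icc 0 1 := fun j hj =>
    ⟨by positivity, div_le_one_of_le₀ (by exact_mod_cast Finset.mem_range_succ_iff.1 hj) hn'.le⟩
  have hreflect : ∑ j ∈ Finset.range (n + 1), U (j / n) = ∑ j ∈ Finset.range (n + 1), U (0 + 1 - j / n) := by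
    rw [← Finset.sum_range_reflect]
    refine Finset.sum_congr rfl fun j hj => ?_
    rw [Nat.add_sub_cancel, Nat.cast_sub (Finset.mem_range_succ_iff.1 hj), sub_div,
      div_self hn'.ne', zero_add]
  have hpair : ∑ _j ∈ Finset.range (n + 1), (U 0 + U 1) ≤
      ∑ j ∈ Finset.range (n + 1), (U (j / n) + U (0 + 1 - j / n)) :=
    Finset.sum_le_sum fun j hj => hU.add_le_add_reflect (left_mem_Icc.2 zero_le_one)
      (right_mem_Icc.2 zero_le_one) (by rw [segment_eq_Icc zero_le_one]; exact hnode j hj)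
  rw [Finset.sum_const, Finset.card_range, nsmul_eq_mul, Finset.sum_add_distrib, ← hreflect]
    at hpair
  push_cast at hpair
  linarith

theorem stmt_1 (U : ℝ → ℝ) (hU : ConcaveOn ℝ (Set.Icc 0 1) U)
    (hcont : ContinuousOn U (Set.Icc 0 1)) (ℓ : ℕ) (hℓ : 2 ≤ ℓ) :
    (1 / (ℓ : ℝ)) * ∑ j ∈ Finset.range ℓ, U ((j : ℝ) / ((ℓ : ℝ) - 1)) ≤
      ∫ t in (0:ℝ)..1, U t := by
  obtain ⟨n, rfl⟩ : ∃ n, ℓ = n + 1 := ⟨ℓ - 1, by omega⟩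
  have hn : n ≠ 0 := by omega
  have hn' : (0 : ℝ) < n := by positivity
  have hmean := hU.endpoint_mean_le_sum_range hn
  have htrap := hU.trapezoidal_rule_le_intervalIntegral hcont hn
  push_cast
  simp only [add_sub_cancel_right]
  set S := ∑ j ∈ Finset.range (n + 1), U (j / n)
  calc 1 / ((n : ℝ) + 1) * S ≤ (S - (U 0 + U 1) / 2) / n := by
        rw [one_div_mul_eq_div, div_le_div_iff₀ (by positivity) hn']
        nlinarith
    _ ≤ ∫ t in (0 : ℝ)..1, U t := htrap
end

section
/- Let f : [0,1] → ℝ be defined by f(t) = (t/(1−t))·log₂(1/t) for t ∈ (0,1), f(0) = 0, and f(1) = log₂ e. Then f is concave on [0,1]. -/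
/-!
Up to the factor `1 / log 2`, `f` is `φ t = t log t / (t - 1)`, and `φ(1) = 1` is the value of
`log t / (t - 1)` at `t = 1` by continuity, i.e. `log' 1`. A direct computation gives
`φ''(t) = (1 - t² + 2 t log t) / (t (t - 1)³)` on `(0, 1)`, and the numerator is nonnegative because
`sinh s ≤ s` for `s = log t ≤ 0`. Since `t log t` is continuous at `0`, `φ` is continuous on
`[0, 1]`, hence concave there.
-/

open Real Set Filter Topology

lemma sq_sub_one_le_two_mul_mul_log {t : ℝ} (h0 : 0 < t) (h1 : t ≤ 1) :
    t ^ 2 - 1 ≤ 2 * t * log t := by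
  have hsinh : (t - t⁻¹) / 2 ≤ log t := by
    rw [← sinh_log h0, sinh_le_self_iff]
    exact log_nonpos h0.le h1
  have : t * (t - t⁻¹) = t ^ 2 - 1 := by field_simp
  nlinarith

lemma mul_dslope_log_one_of_ne {t : ℝ} (ht : t ≠ 1) :
    t * dslope log 1 t = t * log t / (t - 1) := by
  rw [dslope_of_ne _ ht, slope_def_field, log_one, sub_zero, mul_div_assoc]

lemma mul_dslope_log_one_eventuallyEq {t : ℝ} (ht : t ≠ 1) :
    (fun s => s * log s / (s - 1)) =ᶠ[𝓝 t] fun s => s * dslope log 1 s := by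
  filter_upwards [eventually_ne_nhds ht] with s hs using (mul_dslope_log_one_of_ne hs).symm

lemma continuous_mul_dslope_log_one : Continuous fun t => t * dslope log 1 t := by
  refine continuous_iff_continuousAt.2 fun t => ?_
  rcases eq_or_ne t 1 with rfl | ht
  · exact continuousAt_id.mul (continuousAt_dslope_same.2 (differentiableAt_log one_ne_zero))
  · exact (ContinuousAt.div (f := fun s => s * log s) continuous_mul_log.continuousAt
      (continuousAt_id.sub continuousAt_const) (sub_ne_zero.2 ht)).congr
      (mul_dslope_log_one_eventuallyEq ht)

lemma hasDerivAt_mul_log_div_sub_one {t : ℝ} (h0 : t ≠ 0) (h1 : t ≠ 1) :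
    HasDerivAt (fun s => s * log s / (s - 1)) ((t - 1 - log t) / (t - 1) ^ 2) t := by
  have h1' : t - 1 ≠ 0 := sub_ne_zero.2 h1
  refine (((hasDerivAt_id' t).mul (hasDerivAt_log h0)).div
    ((hasDerivAt_id' t).sub_const 1) h1').congr_deriv ?_
  simp only [Pi.mul_apply]
  field_simp
  ring

lemma hasDerivAt_sub_one_sub_log_div_sq {t : ℝ} (h0 : t ≠ 0) (h1 : t ≠ 1) :
    HasDerivAt (fun s => (s - 1 - log s) / (s - 1) ^ 2)
      ((1 - t ^ 2 + 2 * t * log t) / (t * (t - 1) ^ 3)) t := by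
  have h1' : t - 1 ≠ 0 := sub_ne_zero.2 h1
  refine ((((hasDerivAt_id' t).sub_const 1).sub (hasDerivAt_log h0)).div
    (((hasDerivAt_id' t).sub_const 1).pow 2) (pow_ne_zero 2 h1')).congr_deriv ?_
  simp only [Pi.sub_apply, Pi.pow_apply]
  field_simp
  ring

lemma concaveOn_mul_dslope_log_one : ConcaveOn ℝ (Icc 0 1) fun t => t * dslope log 1 t := by
  refine concaveOn_of_hasDerivWithinAt2_nonpos (convex_Icc 0 1)
    continuous_mul_dslope_log_one.continuousOn (f' := fun t => (t - 1 - log t) / (t - 1) ^ 2)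
    (f'' := fun t => (1 - t ^ 2 + 2 * t * log t) / (t * (t - 1) ^ 3))
    ?_ ?_ ?_ <;> rw [interior_Icc] <;> rintro t ⟨h0, h1⟩
  · exact ((hasDerivAt_mul_log_div_sub_one h0.ne' h1.ne).congr_of_eventuallyEq
      (mul_dslope_log_one_eventuallyEq h1.ne).symm).hasDerivWithinAt
  · exact (hasDerivAt_sub_one_sub_log_div_sq h0.ne' h1.ne).hasDerivWithinAt
  · refine div_nonpos_of_nonneg_of_nonpos ?_ ?_
    · linarith [sq_sub_one_le_two_mul_mul_log h0 h1.le]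
    · exact (mul_neg_of_pos_of_neg h0 (Odd.pow_neg (by decide) (by linarith))).le

theorem stmt_3 (f : ℝ → ℝ) (h0 : f 0 = 0) (h1 : f 1 = Real.logb 2 (Real.exp 1))
    (hf : ∀ t ∈ Set.Ioo (0:ℝ) 1, f t = (t / (1 - t)) * Real.logb 2 (1 / t)) :
    ConcaveOn ℝ (Set.Icc 0 1) f := by
  refine (concaveOn_mul_dslope_log_one.smul (inv_nonneg.2 (log_pos one_lt_two).le)).congr ?_
  rintro t ⟨ht0, ht1⟩
  rcases ht0.eq_or_lt with rfl | ht0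
  · simp [h0]
  rcases ht1.eq_or_lt with rfl | ht1
  · simp [h1, logb, dslope_same]
  dsimp only
  rw [hf t ⟨ht0, ht1⟩, smul_eq_mul, mul_dslope_log_one_of_ne ht1.ne, logb, one_div, log_inv]
  have : t - 1 ≠ 0 := sub_ne_zero.2 ht1.ne
  have : 1 - t ≠ 0 := sub_ne_zero.2 ht1.ne'
  field_simp
  ring
end

section
/- Let f be the function with f(t) = (t/(1−t))·log₂(1/t) on (0,1), f(0) = 0, f(1) = log₂ e. Then f is concave with f(0) = 0, and consequently for all a, b ≥ 0 with a + b ≤ 1, f(a + b) − f(a) ≤ f(b). -/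
/-!
Up to the factor `1 / log 2`, `f` is `φ t = -t log t / (1 - t)`. Since `φ t = t · slope log 1 t`,
it extends continuously to `t = 1` with value `log' 1 = 1`. On `(0, 1)`,
`φ'' t = (t - t⁻¹ - 2 log t) / (1 - t)³ ≤ 0`, because `t - t⁻¹ = 2 sinh (log t) ≤ 2 log t` for
`log t ≤ 0`; so `φ` is concave. A concave function with `f 0 ≥ 0` is subadditive:
concavity along the chord from `0` to `a + b` gives `f a ≥ a / (a + b) · f (a + b)`, and likewise
for `b`.
-/

open Real Set Filter Topology

theorem ConcaveOn.map_add_le {𝕜 : Type*} [Field 𝕜] [LinearOrder 𝕜] [IsStrictOrderedRing 𝕜]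
    {s : Set 𝕜} {f : 𝕜 → 𝕜} (hf : ConcaveOn 𝕜 s f) (hs : 0 ∈ s) (hf0 : 0 ≤ f 0) {a b : 𝕜}
    (ha : 0 ≤ a) (hb : 0 ≤ b) (hab : a + b ∈ s) : f (a + b) ≤ f a + f b := by
  rcases (add_nonneg ha hb).eq_or_lt with hsum | hsum
  · obtain ⟨rfl, rfl⟩ : a = 0 ∧ b = 0 := ⟨by linarith, by linarith⟩
    simpa using hf0
  have chord : ∀ c, 0 ≤ c → c ≤ a + b → c / (a + b) * f (a + b) ≤ f c := by
    intro c hc0 hc1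
    have hw : c / (a + b) ≤ 1 := (div_le_one hsum).2 hc1
    have h := hf.2 hs hab (sub_nonneg.2 hw) (div_nonneg hc0 hsum.le) (sub_add_cancel _ _)
    simp only [smul_eq_mul, mul_zero, zero_add, div_mul_cancel₀ _ hsum.ne'] at h
    linarith [mul_nonneg (sub_nonneg.2 hw) hf0]
  have hsplit : f (a + b) = a / (a + b) * f (a + b) + b / (a + b) * f (a + b) := by
    rw [← add_mul, ← add_div, div_self hsum.ne', one_mul]
  linarith [chord a ha (by linarith), chord b hb (by linarith)]

theorem Real.self_sub_inv_le_two_mul_log {t : ℝ} (ht0 : 0 < t) (ht1 : t ≤ 1) :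
    t - t⁻¹ ≤ 2 * log t := by
  have h := sinh_le_self_iff.2 (log_nonpos ht0.le ht1)
  rw [sinh_log ht0] at h
  linarith

noncomputable def negMulLogDivOneSub : ℝ → ℝ :=
  Function.update (fun t ↦ negMulLog t / (1 - t)) 1 1

lemma negMulLogDivOneSub_of_ne_one {t : ℝ} (ht : t ≠ 1) :
    negMulLogDivOneSub t = negMulLog t / (1 - t) :=
  Function.update_of_ne ht _ _

lemma tendsto_negMulLog_div_one_sub :
    Tendsto (fun t ↦ negMulLog t / (1 - t)) (𝓝[≠] 1) (𝓝 1) := by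
  have h := hasDerivAt_iff_tendsto_slope.1 (hasDerivAt_log one_ne_zero)
  have h' := (tendsto_nhdsWithin_of_tendsto_nhds (continuous_id.tendsto 1)).mul h
  rw [inv_one, mul_one] at h'
  refine h'.congr' (eventually_nhdsWithin_of_forall fun t ht ↦ ?_)
  have h1t : 1 - t ≠ 0 := sub_ne_zero.2 (Ne.symm ht)
  have ht1 : t - 1 ≠ 0 := sub_ne_zero.2 ht
  rw [slope_def_field, log_one, negMulLog_def, id]
  field_simp
  ring

lemma continuous_negMulLogDivOneSub : Continuous negMulLogDivOneSub := by
  refine continuous_iff_continuousAt.2 fun t ↦ ?_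
  rcases eq_or_ne t 1 with rfl | ht
  · exact continuousAt_update_same.2 tendsto_negMulLog_div_one_sub
  · have : ContinuousAt (fun t ↦ negMulLog t / (1 - t)) t :=
      continuous_negMulLog.continuousAt.div (by fun_prop) (sub_ne_zero.2 (Ne.symm ht))
    exact this.congr_of_eventuallyEq
      ((eventually_ne_nhds ht).mono fun _ ↦ negMulLogDivOneSub_of_ne_one)

lemma hasDerivAt_negMulLogDivOneSub {t : ℝ} (ht0 : t ≠ 0) (ht1 : t ≠ 1) :
    HasDerivAt negMulLogDivOneSub ((t - 1 - log t) / (1 - t) ^ 2) t := by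
  have h1t : 1 - t ≠ 0 := sub_ne_zero.2 (Ne.symm ht1)
  have h := (hasDerivAt_negMulLog ht0).div ((hasDerivAt_id t).const_sub 1) h1t
  refine (h.congr_deriv ?_).congr_of_eventuallyEq
    ((eventually_ne_nhds ht1).mono fun _ ↦ negMulLogDivOneSub_of_ne_one)
  simp only [negMulLog_def, id]
  field_simp
  ring

lemma hasDerivAt_deriv_negMulLogDivOneSub {t : ℝ} (ht0 : t ≠ 0) (ht1 : t ≠ 1) :
    HasDerivAt (fun t ↦ (t - 1 - log t) / (1 - t) ^ 2)
      ((t - t⁻¹ - 2 * log t) / (1 - t) ^ 3) t := by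
  have h1t : 1 - t ≠ 0 := sub_ne_zero.2 (Ne.symm ht1)
  have h := (((hasDerivAt_id t).sub_const 1).sub (hasDerivAt_log ht0)).div
    (((hasDerivAt_id t).const_sub 1).pow 2) (pow_ne_zero 2 h1t)
  refine h.congr_deriv ?_
  simp only [id, Pi.pow_apply, Pi.sub_apply]
  field_simp
  ring

theorem concaveOn_negMulLogDivOneSub : ConcaveOn ℝ (Icc 0 1) negMulLogDivOneSub := by
  refine concaveOn_of_hasDerivWithinAt2_nonpos (f' := fun t ↦ (t - 1 - log t) / (1 - t) ^ 2)
    (f'' := fun t ↦ (t - t⁻¹ - 2 * log t) / (1 - t) ^ 3) (convex_Icc 0 1)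
    continuous_negMulLogDivOneSub.continuousOn
    (fun t ht ↦ ?_) (fun t ht ↦ ?_) (fun t ht ↦ ?_) <;> rw [interior_Icc] at ht
  · exact (hasDerivAt_negMulLogDivOneSub ht.1.ne' ht.2.ne).hasDerivWithinAt
  · exact (hasDerivAt_deriv_negMulLogDivOneSub ht.1.ne' ht.2.ne).hasDerivWithinAt
  · exact div_nonpos_of_nonpos_of_nonneg
      (by linarith [Real.self_sub_inv_le_two_mul_log ht.1 ht.2.le])
      (pow_nonneg (sub_nonneg.2 ht.2.le) 3)

theorem stmt_4 (f : ℝ → ℝ) (h0 : f 0 = 0) (h1 : f 1 = Real.logb 2 (Real.exp 1))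
    (hf : ∀ t ∈ Set.Ioo (0:ℝ) 1, f t = (t / (1 - t)) * Real.logb 2 (1 / t)) :
    ConcaveOn ℝ (Set.Icc 0 1) f ∧
      ∀ a b : ℝ, 0 ≤ a → 0 ≤ b → a + b ≤ 1 → f (a + b) - f a ≤ f b := by
  have hf_eq : EqOn ((log 2)⁻¹ • negMulLogDivOneSub) f (Icc 0 1) := by
    rintro t ⟨ht0, ht1⟩
    rcases ht0.eq_or_lt with rfl | ht0
    · simp [negMulLogDivOneSub_of_ne_one, h0]
    rcases ht1.eq_or_lt with rfl | ht1
    · simp [negMulLogDivOneSub, h1, logb]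
    have h1t : 1 - t ≠ 0 := sub_ne_zero.2 ht1.ne'
    rw [hf t ⟨ht0, ht1⟩, Pi.smul_apply, negMulLogDivOneSub_of_ne_one ht1.ne, logb, one_div,
      log_inv, negMulLog_def, smul_eq_mul]
    field_simp
  have hconc : ConcaveOn ℝ (Icc 0 1) f :=
    (concaveOn_negMulLogDivOneSub.smul (inv_nonneg.2 (log_nonneg one_le_two))).congr hf_eq
  refine ⟨hconc, fun a b ha hb hab ↦ ?_⟩
  have := hconc.map_add_le ⟨le_rfl, zero_le_one⟩ h0.ge ha hb ⟨add_nonneg ha hb, hab⟩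
  linarith
end

section
/- Let G be a finite simple graph on vertex set V and let K be its bipartite double cover, the bipartite graph on V × {0,1} with edges {(x,0),(y,1)} for each edge {x,y} of G. Then for every integer ℓ ≥ 0, (number of matchings of size ℓ in G)² ≤ number of matchings of size 2ℓ in K. -/
/-- `m` is a set of pairwise disjoint edges of `G`. -/
def IsMatchingSet {V : Type*} (G : SimpleGraph V) (m : Finset (Sym2 V)) : Prop :=
  (↑m ⊆ G.edgeSet) ∧ ∀ e ∈ m, ∀ f ∈ m, e ≠ f → ∀ v : V, v ∈ e → v ∉ f

/-!
The union of two matchings `M`, `N` of `G` is properly 2-colourable. To see this, double the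
vertex set to `V × Bool`: the partner maps of `M` and `N`, with unmatched vertices sent to their
copy in the other layer, become fixed-point-free involutions `a`, `b`. An odd word in `a`, `b`
is conjugate to `a` or `b`, so `a x` never lies in the `a * b`-cycle of `x`; hence the graph
joining `x` to the `a * b`-cycle of `a x` has only even closed walks.

Given such a colouring `t`, lift each edge of `M` along `v ↦ (v, t v)` and each edge of `N`
along `v ↦ (v, !t v)`: the result is a matching of `K` of size `|M| + |N|`. Choosing `t`
canonically from `M ∪ N`, which is the projection of the lift, makes `(M, N) ↦ lift`
injective.
-/

open Function SimpleGraph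

theorem Equivalence.exists_bool_ne_of_involutive {X : Type*} {r : X → X → Prop}
    (hr : Equivalence r) {a : X → X} (ha : Involutive a) (hra : ∀ {x y}, r x y → r (a x) (a y))
    (hfree : ∀ x, ¬ r (a x) x) :
    ∃ t : X → Bool, ∀ {x y}, r (a x) y → t x ≠ t y := by
  have hswap : ∀ {x y}, r (a x) y → r x (a y) := fun {x y} h => by simpa only [ha x] using hra h
  let Γ : SimpleGraph X :=
    { Adj := fun x y => r (a x) y
      symm := ⟨fun _ _ h => hr.symm (hswap h)⟩
      loopless := ⟨hfree⟩ }
  have hwalk : ∀ {u v} (w : Γ.Walk u v), (Even w.length → r u v) ∧ (Odd w.length → r (a u) v) := by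
    intro u v w
    induction w with
    | nil => exact ⟨fun _ => hr.refl _, fun h => absurd h (by simp)⟩
    | cons h p ih =>
      rw [Walk.length_cons, Nat.even_add_one, Nat.odd_add_one, Nat.not_even_iff_odd,
        Nat.not_odd_iff_even]
      exact ⟨fun hp => hr.trans (hswap h) (ih.2 hp), fun hp => hr.trans h (ih.1 hp)⟩
  have hΓ : Γ.Colorable 2 := two_colorable_iff_forall_loop_even.2 fun u w =>
    Nat.not_odd_iff_even.1 fun hw => hfree u ((hwalk w).2 hw)
  exact ⟨hΓ.toColoring (by simp), fun h => (hΓ.toColoring _).valid h⟩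

theorem Equiv.Perm.exists_bool_ne_of_involutive {X : Type*} {a b : Equiv.Perm X}
    (ha : Involutive a) (hb : Involutive b) (ha' : ∀ x, a x ≠ x) (hb' : ∀ x, b x ≠ x) :
    ∃ t : X → Bool, ∀ x, t (a x) ≠ t x ∧ t (b x) ≠ t x := by
  set π := a * b
  have hconj : ∀ (n : ℤ) y, a ((π ^ n) y) = (π ^ (-n)) (a y) := by
    have : SemiconjBy a π π⁻¹ := eq_inv_mul_iff_mul_eq.2 <| by
      ext y; simp [π, ha _, hb _]
    intro n y
    rw [← Equiv.Perm.mul_apply, (this.zpow_right n).eq, inv_zpow', Equiv.Perm.mul_apply]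
  have hra : ∀ {x y}, π.SameCycle x y → π.SameCycle (a x) (a y) := by
    rintro x y ⟨n, rfl⟩
    exact ⟨-n, by rw [hconj]⟩
  -- `π ^ (2n) * a` is conjugate to `a` and `π ^ (2n+1) * a` to `b`, so neither has a fixed point.
  have hfree : ∀ x, ¬ π.SameCycle (a x) x := by
    rintro x ⟨k, hk⟩
    obtain ⟨n, rfl | rfl⟩ := Int.even_or_odd' k
    · rw [show π ^ (2 * n) = π ^ n * π ^ n by group, Equiv.Perm.mul_apply] at hk
      apply ha' ((π ^ n) (a x))
      rw [hconj, ha x, zpow_neg, Equiv.Perm.inv_eq_iff_eq, hk]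
    · rw [show π ^ (2 * n + 1) = π ^ n * π * π ^ n by group, Equiv.Perm.mul_apply,
        Equiv.Perm.mul_apply] at hk
      apply hb' ((π ^ n) (a x))
      apply a.injective
      rw [hconj, ha x, zpow_neg, eq_comm, Equiv.Perm.inv_eq_iff_eq]
      exact hk.symm
  obtain ⟨t, ht⟩ := (Equiv.Perm.SameCycle.equivalence π).exists_bool_ne_of_involutive ha hra hfree
  refine ⟨t, fun x => ⟨(ht (Equiv.Perm.SameCycle.refl _ _)).symm, (ht ?_).symm⟩⟩
  have : a (π x) = b x := ha _
  exact this ▸ hra (Equiv.Perm.SameCycle.refl _ _ |>.apply_right)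

theorem prodMk_self_injective {α β : Type*} (f : α → β) : Injective fun x => (x, f x) :=
  fun _ _ h => congrArg Prod.fst h

section

variable {V : Type*}

open Classical in
noncomputable def matchPartner (M : Finset (Sym2 V)) (x : V) : V :=
  if h : ∃ y, s(x, y) ∈ M then h.choose else x

noncomputable def bipartition (H : Finset (Sym2 V)) : V → Bool :=
  Classical.epsilon fun t => ∀ x y, s(x, y) ∈ H → t x ≠ t y

theorem bipartition_ne {H : Finset (Sym2 V)}
    (h : ∃ t : V → Bool, ∀ x y, s(x, y) ∈ H → t x ≠ t y) :
    ∀ x y, s(x, y) ∈ H → bipartition H x ≠ bipartition H y :=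
  Classical.epsilon_spec h

def liftEdge (c : V → Bool) : Sym2 V → Sym2 (V × Bool) :=
  Sym2.map fun v => (v, c v)

theorem mem_liftEdge {c : V → Bool} {e : Sym2 V} {v : V} {i : Bool} :
    (v, i) ∈ liftEdge c e ↔ v ∈ e ∧ c v = i := by
  simp [liftEdge, Sym2.mem_map]

theorem liftEdge_injective (c : V → Bool) : Injective (liftEdge c) :=
  Sym2.map.injective (prodMk_self_injective c)

theorem map_fst_liftEdge (c : V → Bool) (e : Sym2 V) : (liftEdge c e).map Prod.fst = e := by
  simp [liftEdge, Sym2.map_map]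

theorem liftEdge_ne_liftEdge_not (c : V → Bool) (e f : Sym2 V) :
    liftEdge c e ≠ liftEdge (fun v => !c v) f := by
  induction e using Sym2.ind with
  | _ x y =>
    intro h
    have hx : (x, c x) ∈ liftEdge (fun v => !c v) f :=
      h ▸ mem_liftEdge.2 ⟨Sym2.mem_mk_left x y, rfl⟩
    exact Bool.not_ne_self (c x) (mem_liftEdge.1 hx).2

namespace IsMatchingSet

variable {G : SimpleGraph V} {M : Finset (Sym2 V)}

theorem matchPartner_eq (hM : IsMatchingSet G M) {x y : V} (h : s(x, y) ∈ M) :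
    matchPartner M x = y := by
  have hex : ∃ y, s(x, y) ∈ M := ⟨y, h⟩
  rw [matchPartner, dif_pos hex]
  by_contra hne
  refine hM.2 _ hex.choose_spec _ h ?_ x (Sym2.mem_mk_left _ _) (Sym2.mem_mk_left _ _)
  simp only [ne_eq, Sym2.eq_iff, true_and, hne, false_or, not_and]
  exact fun h1 h2 => hne (h2.trans h1)

theorem matchPartner_involutive (hM : IsMatchingSet G M) : Involutive (matchPartner M) := by
  intro x
  by_cases h : ∃ y, s(x, y) ∈ M
  · obtain ⟨y, hy⟩ := h
    rw [hM.matchPartner_eq hy, hM.matchPartner_eq (Sym2.eq_swap ▸ hy)]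
  · simp [matchPartner, h]

theorem image_map {W : Type*} [DecidableEq W] {K : SimpleGraph W} {φ : V → W} (hφ : Injective φ)
    (hM : IsMatchingSet G M) (hK : ∀ e ∈ M, e.map φ ∈ K.edgeSet) :
    IsMatchingSet K (M.image (Sym2.map φ)) := by
  refine ⟨by simpa [Set.subset_def] using hK, ?_⟩
  simp only [Finset.mem_image]
  rintro _ ⟨e, he, rfl⟩ _ ⟨f, hf, rfl⟩ hef w hwe hwf
  obtain ⟨v, hv, rfl⟩ := Sym2.mem_map.1 hwe
  refine hM.2 e he f hf (fun h => hef (h ▸ rfl)) v hv ?_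
  simpa [Sym2.mem_map, hφ.eq_iff] using hwf

end IsMatchingSet

section DecidableEq

variable [DecidableEq V]

def coverInvolution (p : V → V) (z : V × Bool) : V × Bool :=
  if p z.1 = z.1 then (z.1, !z.2) else (p z.1, z.2)

theorem coverInvolution_ne (p : V → V) (z : V × Bool) : coverInvolution p z ≠ z := by
  unfold coverInvolution
  split_ifs with h
  · exact fun hz => Bool.not_ne_self z.2 (congrArg Prod.snd hz)
  · exact fun hz => h (congrArg Prod.fst hz)

theorem coverInvolution_involutive {p : V → V} (hp : Involutive p) :
    Involutive (coverInvolution p) := by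
  rintro ⟨x, i⟩
  by_cases h : p x = x
  · simp [coverInvolution, h]
  · simp [coverInvolution, h, hp x, Ne.symm h]

noncomputable def liftPair (M N : Finset (Sym2 V)) : Finset (Sym2 (V × Bool)) :=
  M.image (liftEdge (bipartition (M ∪ N))) ∪ N.image (liftEdge fun v => !bipartition (M ∪ N) v)

theorem card_liftPair (M N : Finset (Sym2 V)) : (liftPair M N).card = M.card + N.card := by
  rw [liftPair, Finset.card_union_of_disjoint,
    Finset.card_image_of_injective _ (liftEdge_injective _),
    Finset.card_image_of_injective _ (liftEdge_injective _)]
  simp only [Finset.disjoint_left, Finset.mem_image, not_exists, not_and]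
  rintro _ ⟨e, -, rfl⟩ f -
  exact (liftEdge_ne_liftEdge_not _ e f).symm

theorem image_fst_liftPair (M N : Finset (Sym2 V)) :
    (liftPair M N).image (Sym2.map Prod.fst) = M ∪ N := by
  simp [liftPair, Finset.image_union, Finset.image_image, Function.comp_def, map_fst_liftEdge]

theorem liftEdge_mem_liftPair_iff_left {M N : Finset (Sym2 V)} {e : Sym2 V} :
    liftEdge (bipartition (M ∪ N)) e ∈ liftPair M N ↔ e ∈ M := by
  simp [liftPair, (liftEdge_injective _).eq_iff, Ne.symm (liftEdge_ne_liftEdge_not _ _ _)]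

theorem liftEdge_mem_liftPair_iff_right {M N : Finset (Sym2 V)} {e : Sym2 V} :
    liftEdge (fun v => !bipartition (M ∪ N) v) e ∈ liftPair M N ↔ e ∈ N := by
  simp [liftPair, (liftEdge_injective _).eq_iff, liftEdge_ne_liftEdge_not]

theorem liftPair_injective :
    Injective fun p : Finset (Sym2 V) × Finset (Sym2 V) => liftPair p.1 p.2 := by
  rintro ⟨M, N⟩ ⟨M', N'⟩ h
  replace h : liftPair M N = liftPair M' N' := h
  have hU : M ∪ N = M' ∪ N' := by rw [← image_fst_liftPair, h, image_fst_liftPair]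
  ext e
  · rw [← liftEdge_mem_liftPair_iff_left (N := N), ← liftEdge_mem_liftPair_iff_left (N := N'),
      ← hU, h]
  · rw [← liftEdge_mem_liftPair_iff_right (M := M), ← liftEdge_mem_liftPair_iff_right (M := M'),
      ← hU, h]

namespace IsMatchingSet

variable {G : SimpleGraph V} {M N : Finset (Sym2 V)}

theorem coverInvolution_matchPartner (hM : IsMatchingSet G M) {x y : V} (h : s(x, y) ∈ M)
    (i : Bool) : coverInvolution (matchPartner M) (x, i) = (y, i) := by
  have hxy : y ≠ x := (G.ne_of_adj (hM.1 h)).symm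
  simp [coverInvolution, hM.matchPartner_eq h, hxy]

theorem exists_bool_ne_union (hM : IsMatchingSet G M) (hN : IsMatchingSet G N) :
    ∃ t : V → Bool, ∀ x y, s(x, y) ∈ M ∪ N → t x ≠ t y := by
  obtain ⟨t, ht⟩ := Equiv.Perm.exists_bool_ne_of_involutive
    (coverInvolution_involutive hM.matchPartner_involutive).toPerm_involutive
    (coverInvolution_involutive hN.matchPartner_involutive).toPerm_involutive
    (coverInvolution_ne _) (coverInvolution_ne _)
  refine ⟨fun x => t (x, false), fun x y hxy => ?_⟩
  rcases Finset.mem_union.1 hxy with h | h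
  · simpa [hM.coverInvolution_matchPartner h] using ((ht (x, false)).1).symm
  · simpa [hN.coverInvolution_matchPartner h] using ((ht (x, false)).2).symm

theorem union (hM : IsMatchingSet G M) (hN : IsMatchingSet G N)
    (hMN : ∀ e ∈ M, ∀ f ∈ N, ∀ v ∈ e, v ∉ f) : IsMatchingSet G (M ∪ N) := by
  refine ⟨by simpa using And.intro hM.1 hN.1, ?_⟩
  simp only [Finset.mem_union]
  rintro e (he | he) f (hf | hf) hef v hve hvf
  · exact hM.2 e he f hf hef v hve hvf
  · exact hMN e he f hf v hve hvf
  · exact hMN f hf e he v hvf hve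
  · exact hN.2 e he f hf hef v hve hvf

theorem liftPair {K : SimpleGraph (V × Bool)}
    (hGK : ∀ p q : V × Bool, G.Adj p.1 q.1 → p.2 ≠ q.2 → K.Adj p q)
    (hM : IsMatchingSet G M) (hN : IsMatchingSet G N) : IsMatchingSet K (liftPair M N) := by
  have hc := bipartition_ne (hM.exists_bool_ne_union hN)
  have hlift : ∀ {c : V → Bool} {e : Sym2 V}, e ∈ G.edgeSet →
      (∀ x y, e = s(x, y) → c x ≠ c y) → liftEdge c e ∈ K.edgeSet := by
    intro c e he hce
    induction e using Sym2.ind with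
    | _ x y => exact hGK (x, c x) (y, c y) he (hce x y rfl)
  refine (hM.image_map (prodMk_self_injective _) fun e he => hlift (hM.1 he) ?_).union
    (hN.image_map (prodMk_self_injective _) fun e he => hlift (hN.1 he) ?_) ?_
  · rintro x y rfl
    exact hc x y (Finset.mem_union_left _ he)
  · rintro x y rfl
    simpa using hc x y (Finset.mem_union_right _ he)
  · simp only [Finset.mem_image]
    rintro _ ⟨e, -, rfl⟩ _ ⟨f, -, rfl⟩ ⟨v, i⟩ hve hvf
    exact Bool.not_ne_self _ ((mem_liftEdge.1 hvf).2.trans (mem_liftEdge.1 hve).2.symm)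

end IsMatchingSet

end DecidableEq

end

theorem stmt_9 {V : Type*} [Fintype V] [DecidableEq V] (G : SimpleGraph V)
    (K : SimpleGraph (V × Bool))
    (hK : ∀ p q : V × Bool, K.Adj p q ↔ G.Adj p.1 q.1 ∧ p.2 ≠ q.2)
    (ℓ : ℕ) :
    (Set.ncard {m : Finset (Sym2 V) | IsMatchingSet G m ∧ m.card = ℓ}) ^ 2 ≤
      Set.ncard {m : Finset (Sym2 (V × Bool)) | IsMatchingSet K m ∧ m.card = 2 * ℓ} := by
  set A := {m : Finset (Sym2 V) | IsMatchingSet G m ∧ m.card = ℓ}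
  have hmaps : Set.MapsTo (fun p => liftPair p.1 p.2) (A ×ˢ A)
      {m | IsMatchingSet K m ∧ m.card = 2 * ℓ} := by
    rintro ⟨M, N⟩ ⟨⟨hM, hMℓ⟩, hN, hNℓ⟩
    exact ⟨hM.liftPair (fun p q h h' => (hK p q).2 ⟨h, h'⟩) hN,
      by rw [card_liftPair, hMℓ, hNℓ, two_mul]⟩
  calc A.ncard ^ 2 = (A ×ˢ A).ncard := by rw [Set.ncard_prod, sq]
    _ ≤ _ := Set.ncard_le_ncard_of_injOn _ hmaps liftPair_injective.injOn
end
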